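/- arXiv:1212.2578 — 2 statements merged into one kernel-verified Lean document; each statement's English description precedes it below -/
import Mathlib

section
/- For any complex numbers λ, μ satisfying λ ± √(μ+1) ∉ odd integers (equivalently μ + 1 ≠ (λ + m)² for every odd integer m), the assignments on a vector space with basis {v_k : k ∈ ℤ}: π(H)v_k = (λ+2k)v_k, π(E)v_k = v_{k+1} for k ≥ 0, π(E)v_k = (1/4)(μ - (λ+2k+1)² + 1)v_{k+1} for k < 0, π(F)v_k = v_{k-1} for k ≤ 0, π(F)v_k = (1/4)(μ - (λ+2k-1)² + 1)v_{k-1} for k > 0, define a representation of sl(2,ℂ): the operators satisfy [π(H),π(E)] = 2π(E), [π(H),π(F)] = -2π(F), [π(E),π(F)] = π(H). -/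
/-- `π(H)` on the principal series module `P(λ,μ) = ⊕_{k ∈ ℤ} ℂ·v_k`: `v_k ↦ (λ+2k)v_k`. -/
noncomputable def psH (lam : ℂ) : Module.End ℂ (ℤ →₀ ℂ) :=
  Finsupp.lsum ℂ fun k =>
    LinearMap.toSpanSingleton ℂ (ℤ →₀ ℂ) ((lam + 2 * (k : ℂ)) • Finsupp.single k (1 : ℂ))

/-- `π(E)`: `v_k ↦ v_{k+1}` for `k ≥ 0`, `v_k ↦ ¼(μ-(λ+2k+1)²+1)v_{k+1}` for `k < 0`. -/
noncomputable def psE (lam mu : ℂ) : Module.End ℂ (ℤ →₀ ℂ) :=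
  Finsupp.lsum ℂ fun k =>
    LinearMap.toSpanSingleton ℂ (ℤ →₀ ℂ)
      ((if 0 ≤ k then 1 else (1 / 4) * (mu - (lam + 2 * (k : ℂ) + 1) ^ 2 + 1)) •
        Finsupp.single (k + 1) (1 : ℂ))

/-- `π(F)`: `v_k ↦ v_{k-1}` for `k ≤ 0`, `v_k ↦ ¼(μ-(λ+2k-1)²+1)v_{k-1}` for `k > 0`. -/
noncomputable def psF (lam mu : ℂ) : Module.End ℂ (ℤ →₀ ℂ) :=
  Finsupp.lsum ℂ fun k =>
    LinearMap.toSpanSingleton ℂ (ℤ →₀ ℂ)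
      ((if k ≤ 0 then 1 else (1 / 4) * (mu - (lam + 2 * (k : ℂ) - 1) ^ 2 + 1)) •
        Finsupp.single (k - 1) (1 : ℂ))

lemma psH_single (lam : ℂ) (k : ℤ) :
    psH lam (Finsupp.single k 1) = (lam + 2 * (k : ℂ)) • Finsupp.single k 1 := by
  rw [psH, Finsupp.lsum_single, LinearMap.toSpanSingleton_apply, one_smul]

lemma psE_single (lam mu : ℂ) (k : ℤ) :
    psE lam mu (Finsupp.single k 1) =
      (if 0 ≤ k then 1 else (1 / 4) * (mu - (lam + 2 * (k : ℂ) + 1) ^ 2 + 1)) •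
        Finsupp.single (k + 1) 1 := by
  rw [psE, Finsupp.lsum_single, LinearMap.toSpanSingleton_apply, one_smul]

lemma psF_single (lam mu : ℂ) (k : ℤ) :
    psF lam mu (Finsupp.single k 1) =
      (if k ≤ 0 then 1 else (1 / 4) * (mu - (lam + 2 * (k : ℂ) - 1) ^ 2 + 1)) •
        Finsupp.single (k - 1) 1 := by
  rw [psF, Finsupp.lsum_single, LinearMap.toSpanSingleton_apply, one_smul]

theorem stmt_13 (lam mu : ℂ) (h : ∀ m : ℤ, Odd m → mu + 1 ≠ (lam + (m : ℂ)) ^ 2) :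
    (∀ k : ℤ, psH lam (Finsupp.single k 1) = (lam + 2 * (k : ℂ)) • Finsupp.single k 1) ∧
    (∀ k : ℤ, 0 ≤ k → psE lam mu (Finsupp.single k 1) = Finsupp.single (k + 1) 1) ∧
    (∀ k : ℤ, k < 0 → psE lam mu (Finsupp.single k 1) =
      ((1 / 4) * (mu - (lam + 2 * (k : ℂ) + 1) ^ 2 + 1)) • Finsupp.single (k + 1) 1) ∧
    (∀ k : ℤ, k ≤ 0 → psF lam mu (Finsupp.single k 1) = Finsupp.single (k - 1) 1) ∧
    (∀ k : ℤ, 0 < k → psF lam mu (Finsupp.single k 1) =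
      ((1 / 4) * (mu - (lam + 2 * (k : ℂ) - 1) ^ 2 + 1)) • Finsupp.single (k - 1) 1) ∧
    ⁅psH lam, psE lam mu⁆ = (2 : ℂ) • psE lam mu ∧
    ⁅psH lam, psF lam mu⁆ = -((2 : ℂ) • psF lam mu) ∧
    ⁅psE lam mu, psF lam mu⁆ = psH lam := by
  refine ⟨psH_single lam, ?_, ?_, ?_, ?_, ?_, ?_, ?_⟩
  · intro k hk
    rw [psE_single, if_pos hk, one_smul]
  · intro k hk
    rw [psE_single, if_neg (not_le.mpr hk)]
  · intro k hk
    rw [psF_single, if_pos hk, one_smul]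
  · intro k hk
    rw [psF_single, if_neg (not_le.mpr hk)]
  · apply Finsupp.lhom_ext'
    intro k
    apply LinearMap.ext_ring
    simp only [LinearMap.comp_apply, Finsupp.lsingle_apply,
      LieRing.of_associative_ring_bracket, LinearMap.sub_apply, Module.End.mul_apply,
      LinearMap.smul_apply, psH_single, psE_single, map_smul, smul_smul]
    push_cast
    split_ifs <;> (match_scalars <;> ring)
  · apply Finsupp.lhom_ext'
    intro k
    apply LinearMap.ext_ring
    simp only [LinearMap.comp_apply, Finsupp.lsingle_apply,
      LieRing.of_associative_ring_bracket, LinearMap.sub_apply, Module.End.mul_apply,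
      LinearMap.neg_apply, LinearMap.smul_apply, psH_single, psF_single, map_smul, smul_smul]
    push_cast
    split_ifs <;> (match_scalars <;> ring)
  · apply Finsupp.lhom_ext'
    intro k
    apply LinearMap.ext_ring
    simp only [LinearMap.comp_apply, Finsupp.lsingle_apply,
      LieRing.of_associative_ring_bracket, LinearMap.sub_apply, Module.End.mul_apply,
      LinearMap.smul_apply, psH_single, psE_single, psF_single, map_smul, smul_smul,
      sub_add_cancel, add_sub_cancel_right]
    push_cast
    split_ifs <;> first
      | (exfalso; omega)
      | (match_scalars <;> ring)
end

section
/- Let V be a complex vector space of countable dimension and S ⊆ End(V) a set of operators acting irreducibly (the only S-invariant subspaces are 0 and V). If T ∈ End(V) commutes with every element of S, then T is a scalar multiple of the identity. -/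
/-!
Dixmier's argument. By Schur's lemma a nonzero operator commuting with `S` is invertible, so if
`T` is not a scalar then `T - c` is invertible for every `c : ℂ`, and, `ℂ` being algebraically
closed, so is `p(T)` for every nonzero polynomial `p`. For `v ≠ 0` the vectors `(T - c)⁻¹ v` are
then linearly independent, so `dim V ≥ 𝔠 > ℵ₀`.
-/

open Polynomial Cardinal

universe u w

theorem Module.End.bijective_of_commute_of_irreducible {R V : Type*} [Ring R] [AddCommGroup V]
    [Module R V] {S : Set (Module.End R V)} {f : Module.End R V}
    (hirr : ∀ W : Submodule R V, (∀ g ∈ S, ∀ x ∈ W, g x ∈ W) → W = ⊥ ∨ W = ⊤)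
    (hf : ∀ g ∈ S, Commute f g) (hf0 : f ≠ 0) : Function.Bijective f := by
  have hker : LinearMap.ker f = ⊥ := by
    refine (hirr _ fun g hg x hx => ?_).resolve_right fun h => hf0 (LinearMap.ker_eq_top.mp h)
    rw [LinearMap.mem_ker] at hx ⊢
    rw [← Module.End.mul_apply, (hf g hg).eq, Module.End.mul_apply, hx, map_zero]
  have hrange : LinearMap.range f = ⊤ := by
    refine (hirr _ fun g hg x hx => ?_).resolve_left fun h => hf0 (LinearMap.range_eq_bot.mp h)
    obtain ⟨y, rfl⟩ := hx
    exact ⟨g y, by rw [← Module.End.mul_apply, (hf g hg).eq, Module.End.mul_apply]⟩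
  exact ⟨LinearMap.ker_eq_bot.mp hker, LinearMap.range_eq_top.mp hrange⟩

theorem isUnit_aeval_of_spectrum_eq_empty {K A : Type*} [Field K] [IsAlgClosed K] [Ring A]
    [Algebra K A] {a : A} (ha : spectrum K a = ∅) {p : K[X]} (hp : p ≠ 0) :
    IsUnit (aeval a p) := by
  have hprod : IsUnit (aeval a (p.roots.map fun x => X - C x).prod) := by
    by_contra h
    obtain ⟨k, hk, -⟩ := spectrum.exists_mem_of_not_isUnit_aeval_prod h
    simp [ha] at hk
  rw [(IsAlgClosed.splits p).eq_prod_roots, map_mul, aeval_C]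
  exact ((leadingCoeff_ne_zero.2 hp).isUnit.map _).mul hprod

theorem linearIndependent_of_sub_algebraMap_apply_eq {K V : Type*} [Field K] [AddCommGroup V]
    [Module K V] {T : Module.End K V}
    (hT : ∀ p : K[X], p ≠ 0 → Function.Injective (aeval T p))
    {v : V} (hv : v ≠ 0) {g : K → V} (hg : ∀ c, (T - algebraMap K _ c) (g c) = v) :
    LinearIndependent K g := by
  classical
  refine linearIndependent_iff'.2 fun s a hsum c₀ hc₀ => ?_
  -- applying `∏_{c ∈ s} (T - c)` to the relation turns it into `q(T) v = 0`
  set q : K[X] := ∑ c ∈ s, C (a c) * Lagrange.nodal (s.erase c) id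
  have hqv : aeval T q v = 0 := by
    have h : ∀ c ∈ s, aeval T (Lagrange.nodal s id) (a c • g c)
        = aeval T (C (a c) * Lagrange.nodal (s.erase c) id) v := by
      intro c hc
      rw [map_smul, Lagrange.nodal_eq_mul_nodal_erase hc, mul_comm, map_mul, Module.End.mul_apply,
        map_sub, aeval_X, aeval_C, id_eq, hg, map_mul, aeval_C, Module.End.mul_apply,
        Module.algebraMap_end_apply]
    rw [map_sum, LinearMap.sum_apply, ← Finset.sum_congr rfl h, ← map_sum, hsum, map_zero]
  have hq : q = 0 := by
    by_contra hq
    exact hv (hT q hq (hqv.trans (map_zero _).symm))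
  have heval : q.eval c₀ = a c₀ * (Lagrange.nodal (s.erase c₀) id).eval c₀ := by
    rw [eval_finsetSum, Finset.sum_eq_single c₀]
    · simp
    · intro c hc hne
      exact (eval_mul ..).trans <| mul_eq_zero_of_right _
        (Lagrange.eval_nodal_at_node (v := id) (Finset.mem_erase.2 ⟨Ne.symm hne, hc₀⟩))
    · exact fun h => absurd hc₀ h
  rw [hq, eval_zero, eq_comm, mul_eq_zero] at heval
  exact heval.resolve_right
    (Lagrange.eval_nodal_not_at_node fun c hc => (Finset.ne_of_mem_erase hc).symm)

theorem lift_cardinalMk_le_rank_of_spectrum_eq_empty {K : Type u} {V : Type w} [Field K]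
    [IsAlgClosed K] [AddCommGroup V] [Module K V] [Nontrivial V] {T : Module.End K V}
    (hT : spectrum K T = ∅) : lift.{w} #K ≤ lift.{u} (Module.rank K V) := by
  obtain ⟨v, hv⟩ := exists_ne (0 : V)
  have hsurj : ∀ c, Function.Surjective (T - algebraMap K (Module.End K V) c) := by
    intro c
    have hunit := spectrum.notMem_iff.1 (hT ▸ Set.notMem_empty c)
    rw [← neg_sub, IsUnit.neg_iff] at hunit
    exact ((Module.End.isUnit_iff _).1 hunit).2
  choose g hg using fun c => hsurj c v
  have hinj : ∀ p : K[X], p ≠ 0 → Function.Injective (aeval T p) := fun p hp =>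
    ((Module.End.isUnit_iff _).1 (isUnit_aeval_of_spectrum_eq_empty hT hp)).1
  exact (linearIndependent_of_sub_algebraMap_apply_eq hinj hv hg).cardinal_lift_le_rank

theorem stmt_18 {V : Type*} [AddCommGroup V] [Module ℂ V]
    (hV : ∃ s : Set V, s.Countable ∧ Submodule.span ℂ s = ⊤)
    (S : Set (Module.End ℂ V))
    (hirr : ∀ W : Submodule ℂ V, (∀ f ∈ S, ∀ x ∈ W, f x ∈ W) → W = ⊥ ∨ W = ⊤)
    (T : Module.End ℂ V) (hT : ∀ f ∈ S, T * f = f * T) :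
    ∃ c : ℂ, T = c • (1 : Module.End ℂ V) := by
  rcases subsingleton_or_nontrivial V with _ | _
  · exact ⟨0, Subsingleton.elim _ _⟩
  by_contra! hscalar
  have hspec : spectrum ℂ T = ∅ := by
    refine Set.eq_empty_of_forall_notMem fun c hc => spectrum.mem_iff.1 hc ?_
    refine (Module.End.isUnit_iff _).2 (Module.End.bijective_of_commute_of_irreducible hirr
      (fun f hf => (Algebra.commute_algebraMap_left c f).sub_left (hT f hf)) ?_)
    rw [sub_ne_zero, Algebra.algebraMap_eq_smul_one]
    exact (hscalar c).symm
  obtain ⟨s, hs, hspan⟩ := hV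
  have hrank : Module.rank ℂ V ≤ ℵ₀ := by
    rw [← rank_top, ← hspan]
    exact (rank_span_le s).trans hs.le_aleph0
  have hcont := (lift_cardinalMk_le_rank_of_spectrum_eq_empty hspec).trans (lift_le.2 hrank)
  rw [mk_complex, lift_continuum, lift_aleph0] at hcont
  exact aleph0_lt_continuum.not_ge hcont
end
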